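/- Suppose the inequality a·x ≥ α is valid for the graphical traveling salesman polyhedron P and the face F = {x ∈ P : a·x = α} it defines is nonempty and good. Then a is tight triangular (TT) if and only if F is not contained in any degree facet, i.e., if and only if for every u ∈ V there exists x ∈ F with δ_u·x > 1. -/

import Mathlib

/-!
Every edge `vw` carries weight in some Eulerian vertex `y` of the face, since the face is good and
a face of a convex hull is the convex hull of the generators it contains. Replacing one copy of
`vw` in `y` by the path `v u w` keeps `y` connected Eulerian, changes `a·y` by `t_{u,vw}(a)` and
raises the degree of `u` by two. Validity therefore forces `a` to be metric, and a tight triangle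
at `u` yields a point of the face with `δ_u·x ≥ 2`.

Conversely, a point of the face with `δ_u·x > 1` yields an Eulerian vertex `y` of the face in
which `u` has degree at least four. Two edge copies `uv`, `uw` at `u` can then be shortcut to `vw`
(possibly `v = w`) keeping `y` connected Eulerian: take `v`, `w` in different components of the
support with `u` deleted if possible; by the handshake lemma each such component is joined to `u`
by an even number of edges, so it keeps one. Validity gives `t_{u,vw}(a) ≤ 0`, and metricity turns
this into a tight triangle at `u` (through any third vertex when `v = w`).
-/

open scoped BigOperators

abbrev Edge (n : ℕ) := {e : Sym2 (Fin n) // ¬ e.IsDiag}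

namespace TSP
variable {n : ℕ}
noncomputable section

def dot (a x : Edge n → ℝ) : ℝ := ∑ e, a e * x e
def ev (a : Edge n → ℝ) (u v : Fin n) : ℝ :=
  if h : u = v then 0 else a ⟨s(u, v), fun hd => h (Sym2.mk_isDiag_iff.mp hd)⟩
def indic (u v : Fin n) : Edge n → ℝ := fun e => if e.val = s(u, v) then 1 else 0
def delta (u : Fin n) : Edge n → ℝ := fun e => if u ∈ e.val then 1/2 else 0
def RootedTri (u v w : Fin n) : Prop := v ≠ w ∧ u ≠ v ∧ u ≠ w
def tri (a : Edge n → ℝ) (u v w : Fin n) : ℝ := ev a v u + ev a u w - ev a v w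
def IsMetric (a : Edge n → ℝ) : Prop := ∀ u v w, RootedTri u v w → 0 ≤ tri a u v w
def IsTT (a : Edge n → ℝ) : Prop :=
  IsMetric a ∧ ∀ u, ∃ v w, RootedTri u v w ∧ tri a u v w = 0
def lam (a : Edge n → ℝ) (u : Fin n) : ℝ :=
  sInf {r | ∃ v w, RootedTri u v w ∧ r = tri a u v w}
def theta (a : Edge n → ℝ) : Edge n → ℝ := fun e => a e - ∑ u, lam a u * delta u e
def zvec (n : ℕ) : Edge n → ℝ := fun _ => 2 / ((n : ℝ) - 1)
def gamma (a : Edge n → ℝ) : ℝ := -1 + dot a (zvec n) - ∑ u, lam a u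
def nextF (i : Fin n) : Fin n := ⟨(i.val + 1) % n, Nat.mod_lt _ i.pos⟩
def hamVec (σ : Equiv.Perm (Fin n)) : Edge n → ℝ :=
  fun e => if ∃ i : Fin n, e.val = s(σ i, σ (nextF i)) then 1 else 0
def stsp (n : ℕ) : Set (Edge n → ℝ) :=
  convexHull ℝ {x | ∃ σ : Equiv.Perm (Fin n), x = hamVec σ}
def degree (x : Edge n → ℝ) (u : Fin n) : ℝ := ∑ e, if u ∈ e.val then x e else 0
lemma ev_symm (a : Edge n → ℝ) (u v : Fin n) : ev a u v = ev a v u := by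
  unfold ev
  rcases eq_or_ne u v with h | h
  · subst h; simp
  · rw [dif_neg h, dif_neg (Ne.symm h)]
    congr 1
    exact Subtype.ext (Sym2.eq_swap)
def supportGraph (x : Edge n → ℝ) : SimpleGraph (Fin n) where
  Adj u v := u ≠ v ∧ 0 < ev x u v
  symm := ⟨fun u v h => ⟨h.1.symm, by rw [ev_symm]; exact h.2⟩⟩
  loopless := ⟨fun u h => h.1 rfl⟩
def IsEulerian (x : Edge n → ℝ) : Prop :=
  (∀ e, ∃ m : ℕ, x e = m) ∧ (supportGraph x).Connected ∧
    ∀ u, ∃ m : ℕ, 0 < m ∧ degree x u = 2 * m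
def gtsp (n : ℕ) : Set (Edge n → ℝ) := convexHull ℝ {x | IsEulerian x}
def IsFaceOf (Q F : Set (Edge n → ℝ)) : Prop :=
  ∃ a α, (∀ x ∈ Q, α ≤ dot a x) ∧ F = {x ∈ Q | dot a x = α}
def IsGood (F : Set (Edge n → ℝ)) : Prop := ∀ e : Edge n, ∃ x ∈ F, 0 < x e
def adim (X : Set (Edge n → ℝ)) : ℕ := Module.finrank ℝ (affineSpan ℝ X).direction
def direc (F : Set (Edge n → ℝ)) : Submodule ℝ (Edge n → ℝ) :=
  Submodule.span ℝ {d | ∃ x ∈ F, ∃ y ∈ F, d = y - x}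
def shortcut (u v w : Fin n) : Edge n → ℝ :=
  fun e => indic v w e - indic v u e - indic u w e
def gtspPolar (n : ℕ) : Set (Edge n → ℝ) := {b | ∀ x ∈ gtsp n, 1 ≤ dot b x}

/-- The face of `S` defined by `a ∈ D_S`. -/
def faceS (a : Edge n → ℝ) : Set (Edge n → ℝ) :=
  {x ∈ stsp n | dot a x = dot a (zvec n) - 1}

/-- `D_S`: the points `a ∈ L` whose inequality `a·x ≥ a·z − 1` is valid for `S`
and defines a nonempty good face of `S`. -/
def DS (n : ℕ) : Set (Edge n → ℝ) :=
  {a | (∀ u, dot (delta u) a = 0) ∧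
       (∀ x ∈ stsp n, dot a (zvec n) - 1 ≤ dot a x) ∧
       (faceS a).Nonempty ∧ IsGood (faceS a)}

/-- `D_P`: TT points of `P^△` defining nonempty good faces of `P`. -/
def DP (n : ℕ) : Set (Edge n → ℝ) :=
  {b | b ∈ gtspPolar n ∧ IsTT b ∧
       ({x ∈ gtsp n | dot b x = 1}).Nonempty ∧ IsGood {x ∈ gtsp n | dot b x = 1}}

/-- `𝔉(a)`: faces of `P` definable by rotated versions of `a·x ≥ a·z − 1`. -/
def Frot (a : Edge n → ℝ) : Set (Set (Edge n → ℝ)) :=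
  {F | ∃ ξ : Fin n → ℝ,
    (∀ x ∈ gtsp n,
      dot a (zvec n) - 1 + dot (∑ u, ξ u • delta u) (zvec n)
        ≤ dot (a + ∑ u, ξ u • delta u) x) ∧
    F = {x ∈ gtsp n |
      dot (a + ∑ u, ξ u • delta u) x
        = dot a (zvec n) - 1 + dot (∑ u, ξ u • delta u) (zvec n)}}

/-- `E^u(a)`: the edges achieving the minimal triangle slack rooted at `u`. -/
def Eu (a : Edge n → ℝ) (u : Fin n) : Set (Edge n) :=
  {e | ∃ v w, RootedTri u v w ∧ e.val = s(v, w) ∧ tri a u v w = lam a u}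

def IsFacetP (n : ℕ) (G : Set (Edge n → ℝ)) : Prop :=
  IsFaceOf (gtsp n) G ∧ adim G = n * (n - 1) / 2 - 1
def IsFacetS (n : ℕ) (F : Set (Edge n → ℝ)) : Prop :=
  IsFaceOf (stsp n) F ∧ adim F + 1 = adim (stsp n)
def IsNRFacet (n : ℕ) (G : Set (Edge n → ℝ)) : Prop :=
  IsFacetP n G ∧ IsFacetS n (G ∩ stsp n)
def IsDegreeFacet (n : ℕ) (G : Set (Edge n → ℝ)) : Prop :=
  ∃ u, G = {x ∈ gtsp n | dot (delta u) x = 1}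
def IsNonNegFacet (n : ℕ) (G : Set (Edge n → ℝ)) : Prop :=
  ∃ e : Edge n, G = {x ∈ gtsp n | x e = 0}
def IsNonNRFacet (n : ℕ) (G : Set (Edge n → ℝ)) : Prop :=
  IsFacetP n G ∧ IsGood G ∧ ¬ IsDegreeFacet n G ∧
    adim (G ∩ stsp n) + 1 < adim (stsp n)

/-- Solution set of the relaxation `R_B` (degree inequalities). -/
def RBge {k : ℕ} (n : ℕ) (b : Fin k → Edge n → ℝ) : Set (Edge n → ℝ) :=
  {x | (∀ j, 1 ≤ dot (b j) x) ∧ (∀ v, 1 ≤ dot (delta v) x) ∧ ∀ e, 0 ≤ x e}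

/-- Solution set of `R_B` with degree equations. -/
def RBeq {k : ℕ} (n : ℕ) (b : Fin k → Edge n → ℝ) : Set (Edge n → ℝ) :=
  {x | (∀ j, 1 ≤ dot (b j) x) ∧ (∀ v, dot (delta v) x = 1) ∧ ∀ e, 0 ≤ x e}

/-- The parsimonious property of the relaxation `R_B`. -/
def Parsimonious {k : ℕ} (n : ℕ) (b : Fin k → Edge n → ℝ) : Prop :=
  ∀ c : Edge n → ℝ, IsMetric c →
    sInf (dot c '' RBge n b) = sInf (dot c '' RBeq n b)

/-- Adjacency in the ridge graph of `P`. -/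
def RidgeAdj (n : ℕ) (F G : Set (Edge n → ℝ)) : Prop :=
  IsFacetP n F ∧ IsFacetP n G ∧ F ≠ G ∧ adim (F ∩ G) = n * (n - 1) / 2 - 2

/-- `q_I = Σ_{u ∉ I} δ_u`. -/
def qI (n : ℕ) (I : Finset (Fin n)) : Edge n → ℝ := ∑ u ∈ Iᶜ, delta u

/-- The face `G_I` of `P`. -/
def GI (n : ℕ) (a : Edge n → ℝ) (I : Finset (Fin n)) : Set (Edge n → ℝ) :=
  {x ∈ gtsp n | dot (theta a + qI n I) x = gamma a + dot (qI n I) (zvec n)}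

end

theorem _root_.mem_convexHull_sep_of_mem_convexHull {E : Type*} [AddCommGroup E] [Module ℝ E]
    {S : Set E} {f : E →ₗ[ℝ] ℝ} {α : ℝ} (hS : ∀ s ∈ S, α ≤ f s) {x : E}
    (hx : x ∈ convexHull ℝ S) (hfx : f x = α) : x ∈ convexHull ℝ {s ∈ S | f s = α} := by
  obtain ⟨ι, _, w, z, hw₀, hw₁, hz, rfl⟩ := mem_convexHull_iff_exists_fintype.1 hx
  have hslack : ∑ i, w i * (f (z i) - α) = 0 := by
    simp only [mul_sub, Finset.sum_sub_distrib, ← Finset.sum_mul, hw₁, one_mul, ← hfx,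
      map_sum, map_smul, smul_eq_mul, sub_self]
  have hface : ∀ i, w i ≠ 0 → z i ∈ {s ∈ S | f s = α} := fun i hi =>
    ⟨hz i, by
      have := (Finset.sum_eq_zero_iff_of_nonneg fun j _ =>
        mul_nonneg (hw₀ j) (sub_nonneg.2 (hS _ (hz j)))).1 hslack i (Finset.mem_univ i)
      linarith [(mul_eq_zero.1 this).resolve_left hi]⟩
  rw [← finsum_eq_sum_of_fintype]
  exact (convex_convexHull ℝ _).finsum_mem hw₀ (by rwa [finsum_eq_sum_of_fintype])
    fun i hi => subset_convexHull ℝ _ (hface i hi)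

theorem _root_.exists_mem_ge_of_mem_convexHull_of_eq {E : Type*} [AddCommGroup E] [Module ℝ E]
    {S : Set E} {f : E →ₗ[ℝ] ℝ} {α : ℝ} (hS : ∀ s ∈ S, α ≤ f s) {x : E}
    (hx : x ∈ convexHull ℝ S) (hfx : f x = α) (g : E →ₗ[ℝ] ℝ) :
    ∃ s ∈ S, f s = α ∧ g x ≤ g s := by
  obtain ⟨s, ⟨hsS, hfs⟩, hgs⟩ := (g.convexOn convex_univ).exists_ge_of_mem_convexHull
    (Set.subset_univ _) (mem_convexHull_sep_of_mem_convexHull hS hx hfx)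
  exact ⟨s, hsS, hfs, hgs⟩

theorem _root_.sum_sum_eq_two_mul_sum_sum_lt {ι : Type*} [LinearOrder ι] (s : Finset ι)
    (f : ι → ι → ℝ) (hsymm : ∀ i j, f i j = f j i) (hdiag : ∀ i, f i i = 0) :
    ∑ i ∈ s, ∑ j ∈ s, f i j = 2 * ∑ i ∈ s, ∑ j ∈ s, if i < j then f i j else 0 := by
  have hsplit : ∀ i j, f i j = (if i < j then f i j else 0) + if j < i then f j i else 0 := by
    intro i j
    rcases lt_trichotomy i j with h | rfl | h
    · simp [h, h.not_gt]
    · simp [hdiag]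
    · simp [h, h.not_gt, hsymm i j]
  rw [Finset.sum_congr rfl fun i _ => Finset.sum_congr rfl fun j _ => hsplit i j]
  simp only [Finset.sum_add_distrib]
  rw [Finset.sum_comm (f := fun i j => if j < i then f j i else 0)]
  ring

theorem _root_.SimpleGraph.Connected.of_adj_reachable {V : Type*} {G H : SimpleGraph V}
    (hG : G.Connected) (h : ∀ p q, G.Adj p q → H.Reachable p q) : H.Connected := by
  have := hG.nonempty
  refine SimpleGraph.Connected.mk fun a b => (SimpleGraph.reachable_iff_reflTransGen a b).2 ?_
  exact ((SimpleGraph.reachable_iff_reflTransGen a b).1 (hG.preconnected a b)).lift' id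
    fun p q hpq => (SimpleGraph.reachable_iff_reflTransGen p q).1 (h p q hpq)

theorem _root_.SimpleGraph.eq_of_reachable_deleteIncidenceSet {V : Type*} {G : SimpleGraph V}
    {p u : V} (h : (G.deleteIncidenceSet u).Reachable p u) : p = u := by
  by_contra hpu
  refine SimpleGraph.not_reachable_of_neighborSet_right_eq_empty hpu ?_ h
  ext q
  simp [SimpleGraph.deleteIncidenceSet_adj]

theorem _root_.SimpleGraph.Reachable.exists_reachable_deleteIncidenceSet_adj {V : Type*}
    {G : SimpleGraph V} {p u : V} (h : G.Reachable p u) (hpu : p ≠ u) :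
    ∃ q, (G.deleteIncidenceSet u).Reachable p q ∧ G.Adj q u := by
  obtain ⟨W⟩ := h
  have hu : ∀ {q}, (G.deleteIncidenceSet u).Reachable p q → q ≠ u := fun hq hqu =>
    hpu (SimpleGraph.eq_of_reachable_deleteIncidenceSet (hqu ▸ hq))
  obtain ⟨d, -, hd₁, hd₂⟩ :=
    W.exists_boundary_dart {q | (G.deleteIncidenceSet u).Reachable p q}
      (SimpleGraph.Reachable.refl p) fun h' => hu h' rfl
  by_cases hd₂u : d.snd = u
  · exact ⟨d.fst, hd₁, hd₂u ▸ d.adj⟩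
  · exact absurd (hd₁.trans (SimpleGraph.Adj.reachable
      (SimpleGraph.deleteIncidenceSet_adj.2 ⟨d.adj, hu hd₁, hd₂u⟩))) hd₂

def mkEdge {u v : Fin n} (h : u ≠ v) : Edge n :=
  ⟨s(u, v), fun hd => h (Sym2.mk_isDiag_iff.mp hd)⟩

lemma ev_of_ne (a : Edge n → ℝ) {u v : Fin n} (h : u ≠ v) : ev a u v = a (mkEdge h) :=
  dif_neg h

@[simp] lemma ev_self (a : Edge n → ℝ) (u : Fin n) : ev a u u = 0 := dif_pos rfl

lemma ev_add (a b : Edge n → ℝ) (u v : Fin n) : ev (a + b) u v = ev a u v + ev b u v := by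
  unfold ev; split_ifs <;> simp

lemma ev_sub (a b : Edge n → ℝ) (u v : Fin n) : ev (a - b) u v = ev a u v - ev b u v := by
  unfold ev; split_ifs <;> simp

lemma ev_nonneg {x : Edge n → ℝ} (hx : ∀ e, 0 ≤ x e) (p q : Fin n) : 0 ≤ ev x p q := by
  unfold ev; split_ifs
  exacts [le_rfl, hx _]

lemma ne_of_ev_ne_zero {x : Edge n → ℝ} {p q : Fin n} (h : ev x p q ≠ 0) : p ≠ q := by
  rintro rfl; exact h (ev_self x p)

lemma indic_comm (p q : Fin n) : indic p q = indic q p := by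
  ext e; simp only [indic, Sym2.eq_swap]

lemma indic_nonneg (p q : Fin n) (e : Edge n) : 0 ≤ indic p q e := by
  unfold indic; split_ifs <;> norm_num

lemma ev_indic (p q u v : Fin n) :
    ev (indic p q) u v = if u ≠ v ∧ s(u, v) = s(p, q) then 1 else 0 := by
  unfold ev indic; split_ifs <;> simp_all

lemma ev_indic_self {p q : Fin n} (h : p ≠ q) : ev (indic p q) p q = 1 := by
  simp [ev_indic, h]

lemma ev_indic_of_ne {a b p q : Fin n} (h : s(p, q) ≠ s(a, b)) : ev (indic a b) p q = 0 := by
  simp [ev_indic, h]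

lemma dot_comm (a x : Edge n → ℝ) : dot a x = dot x a := dotProduct_comm a x

lemma dot_add (a x y : Edge n → ℝ) : dot a (x + y) = dot a x + dot a y := dotProduct_add a x y

lemma dot_sub (a x y : Edge n → ℝ) : dot a (x - y) = dot a x - dot a y := dotProduct_sub a x y

lemma dot_neg (a x : Edge n → ℝ) : dot a (-x) = -dot a x := dotProduct_neg a x

lemma dot_indic (a : Edge n → ℝ) (p q : Fin n) : dot a (indic p q) = ev a p q := by
  rcases eq_or_ne p q with rfl | h
  · refine (Finset.sum_eq_zero fun e _ => ?_).trans (ev_self a p).symm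
    rw [indic, if_neg fun he => e.2 (by rw [he]; exact Sym2.mk_isDiag_iff.2 rfl), mul_zero]
  · rw [ev_of_ne a h, dot, Fintype.sum_eq_single (mkEdge h)]
    · simp [indic, mkEdge]
    · intro e he
      rw [indic, if_neg fun h' : e.val = s(p, q) => he (Subtype.ext h'), mul_zero]

lemma sum_indic_apply (r : Fin n) (e : Edge n) :
    ∑ p, indic r p e = if r ∈ e.val then 1 else 0 := by
  split_ifs with hr
  · obtain ⟨o, ho⟩ : ∃ o, e.val = s(r, o) := ⟨_, (Sym2.other_spec' hr).symm⟩
    simp only [indic, ho, Sym2.congr_right]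
    exact Finset.sum_ite_eq _ _ _ |>.trans (if_pos (Finset.mem_univ o))
  · exact Finset.sum_eq_zero fun p _ => if_neg fun h => hr (by rw [h]; exact Sym2.mem_mk_left r p)

lemma degree_eq_sum_ev (x : Edge n → ℝ) (r : Fin n) : degree x r = ∑ p, ev x r p := by
  simp only [← dot_indic, dot]
  rw [Finset.sum_comm]
  simp only [← Finset.mul_sum, sum_indic_apply, degree, mul_ite, mul_one, mul_zero]

lemma exists_ev_pos_of_degree_pos {x : Edge n → ℝ} {u : Fin n} (h : 0 < degree x u) :
    ∃ p, 0 < ev x u p := by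
  rw [degree_eq_sum_ev] at h
  obtain ⟨p, -, hp⟩ := Finset.exists_lt_of_sum_lt (Finset.sum_const_zero.trans_lt h)
  exact ⟨p, hp⟩

lemma degree_pos_of_connected [Nontrivial (Fin n)] {x : Edge n → ℝ} (hx : ∀ e, 0 ≤ x e)
    (hc : (supportGraph x).Connected) (r : Fin n) : 0 < degree x r := by
  obtain ⟨p, -, hp⟩ := hc.preconnected.exists_adj_of_nontrivial r
  rw [degree_eq_sum_ev]
  exact hp.trans_le (Finset.single_le_sum (fun q _ => ev_nonneg hx r q) (Finset.mem_univ p))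

lemma dot_delta (u : Fin n) (x : Edge n → ℝ) : dot (delta u) x = degree x u / 2 := by
  simp only [dot, delta, degree, Finset.sum_div, ite_mul, zero_mul]
  exact Finset.sum_congr rfl fun e _ => by split_ifs <;> ring

lemma ev_delta (r p q : Fin n) :
    ev (delta r) p q = if p ≠ q ∧ (r = p ∨ r = q) then 1 / 2 else 0 := by
  unfold ev delta; split_ifs <;> simp_all

lemma tri_delta {u v w : Fin n} (huv : u ≠ v) (huw : u ≠ w) (r : Fin n) :
    tri (delta r) u v w = (if r = u then 1 else 0) + if v = w ∧ r = v then 1 else 0 := by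
  have := huv.symm
  have := huw.symm
  simp only [tri, ev_delta]
  by_cases hru : r = u <;> by_cases hvw : v = w <;> by_cases hrv : r = v <;>
    by_cases hrw : r = w <;> simp_all <;> norm_num

lemma shortcut_eq (u v w : Fin n) : shortcut u v w = indic v w - indic v u - indic u w := rfl

lemma shortcut_apply_int (u v w : Fin n) (e : Edge n) : ∃ k : ℤ, shortcut u v w e = k := by
  refine ⟨(if e.val = s(v, w) then 1 else 0) - (if e.val = s(v, u) then 1 else 0) -
    (if e.val = s(u, w) then 1 else 0), ?_⟩
  simp only [shortcut, indic]
  push_cast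
  rfl

lemma dot_shortcut (a : Edge n → ℝ) (u v w : Fin n) :
    dot a (shortcut u v w) = -tri a u v w := by
  rw [shortcut_eq, dot_sub, dot_sub, dot_indic, dot_indic, dot_indic, tri, ev_symm a v u]
  ring

lemma dot_delta_shortcut_int {u v w : Fin n} (huv : u ≠ v) (huw : u ≠ w) (r : Fin n) :
    ∃ k : ℤ, dot (delta r) (shortcut u v w) = k := by
  rw [dot_shortcut, tri_delta huv huw]
  exact ⟨-((if r = u then 1 else 0) + if v = w ∧ r = v then 1 else 0), by push_cast; rfl⟩

lemma ev_shortcut_root {u v w : Fin n} (huv : u ≠ v) (huw : u ≠ w) (q : Fin n) :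
    ev (shortcut u v w) u q = -(if q = v then 1 else 0) - if q = w then 1 else 0 := by
  have := huv.symm
  have := huw.symm
  simp only [shortcut_eq, ev_sub, ev_indic, Sym2.eq_iff]
  by_cases hqv : q = v <;> by_cases hqw : q = w <;> by_cases hqu : q = u <;> simp_all

lemma ev_shortcut_of_ne {u v w p q : Fin n} (hp : p ≠ u) (hq : q ≠ u) :
    ev (shortcut u v w) p q = ev (indic v w) p q := by
  have hu : u ∉ s(p, q) := by simp [Sym2.mem_iff, hp.symm, hq.symm]
  rw [shortcut_eq, ev_sub, ev_sub,
    ev_indic_of_ne (a := v) (b := u) fun h => hu (h ▸ Sym2.mem_mk_right v u),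
    ev_indic_of_ne (a := u) (b := w) fun h => hu (h ▸ Sym2.mem_mk_left u w)]
  ring

lemma one_le_of_int_of_pos {r : ℝ} {k : ℤ} (hk : r = k) (hr : 0 < r) : 1 ≤ r := by
  rw [hk] at hr ⊢
  exact_mod_cast (show (0 : ℤ) < k by exact_mod_cast hr)

lemma sub_indic_nonneg {x : Edge n → ℝ} (hint : ∀ e, ∃ k : ℤ, x e = k)
    (hx : ∀ e, 0 ≤ x e) {p q : Fin n} (h : 0 < ev x p q) (e : Edge n) :
    0 ≤ (x - indic p q) e := by
  have hpq := ne_of_ev_ne_zero h.ne'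
  rw [ev_of_ne x hpq] at h
  simp only [Pi.sub_apply, indic]
  split_ifs with he
  · obtain ⟨k, hk⟩ := hint e
    rw [show e = mkEdge hpq from Subtype.ext he] at hk ⊢
    linarith [one_le_of_int_of_pos hk h]
  · simpa using hx e

namespace IsEulerian

variable {y : Edge n → ℝ}

lemma nonneg (hy : IsEulerian y) (e : Edge n) : 0 ≤ y e := by
  obtain ⟨m, hm⟩ := hy.1 e
  exact hm ▸ m.cast_nonneg

lemma apply_int (hy : IsEulerian y) (e : Edge n) : ∃ k : ℤ, y e = k := by
  obtain ⟨m, hm⟩ := hy.1 e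
  exact ⟨m, by simp [hm]⟩

lemma ev_int (hy : IsEulerian y) (p q : Fin n) : ∃ k : ℤ, ev y p q = k := by
  unfold ev; split_ifs
  exacts [⟨0, by simp⟩, hy.apply_int _]

lemma mem_gtsp (hy : IsEulerian y) : y ∈ gtsp n := subset_convexHull ℝ _ hy

lemma nontrivial (hy : IsEulerian y) : Nontrivial (Fin n) := by
  obtain ⟨u⟩ := hy.2.1.nonempty
  obtain ⟨m, hm, hdeg⟩ := hy.2.2 u
  obtain ⟨p, hp⟩ := exists_ev_pos_of_degree_pos (x := y) (u := u)
    (by rw [hdeg]; exact_mod_cast Nat.mul_pos two_pos hm)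
  exact ⟨u, p, ne_of_ev_ne_zero hp.ne'⟩

lemma one_le_dot_delta (hy : IsEulerian y) (u : Fin n) : 1 ≤ dot (delta u) y := by
  obtain ⟨m, hm, hdeg⟩ := hy.2.2 u
  rw [dot_delta, hdeg]
  have : (1 : ℝ) ≤ m := by exact_mod_cast hm
  linarith

lemma four_le_degree (hy : IsEulerian y) {u : Fin n} (h : 1 < dot (delta u) y) :
    4 ≤ degree y u := by
  obtain ⟨m, -, hdeg⟩ := hy.2.2 u
  rw [dot_delta, hdeg] at h
  rw [hdeg]
  have : 1 < m := by exact_mod_cast (by linarith : (1 : ℝ) < m)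
  have : (2 : ℝ) ≤ m := by exact_mod_cast this
  linarith

lemma add {z : Edge n → ℝ} (hy : IsEulerian y) (hz : ∀ e, ∃ k : ℤ, z e = k)
    (hzδ : ∀ r, ∃ k : ℤ, dot (delta r) z = k) (hnn : ∀ e, 0 ≤ (y + z) e)
    (hc : (supportGraph (y + z)).Connected) : IsEulerian (y + z) := by
  have := hy.nontrivial
  refine ⟨fun e => ?_, hc, fun r => ?_⟩
  · obtain ⟨m, hm⟩ := hy.1 e
    obtain ⟨k, hk⟩ := hz e
    have hmk : (0 : ℤ) ≤ m + k := by
      exact_mod_cast (show (0 : ℝ) ≤ m + k by simpa [hm, hk] using hnn e)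
    have h := congrArg (Int.cast (R := ℝ)) (Int.toNat_of_nonneg hmk)
    push_cast at h
    exact ⟨(m + k).toNat, by rw [Pi.add_apply, hm, hk, h]⟩
  · obtain ⟨m, -, hm⟩ := hy.2.2 r
    obtain ⟨k, hk⟩ := hzδ r
    have hdeg : degree (y + z) r = 2 * (m + k) := by
      linarith [dot_delta r (y + z), dot_delta r y, dot_add (delta r) y z]
    have hmk : (0 : ℤ) < m + k := by
      exact_mod_cast (show (0 : ℝ) < m + k by linarith [degree_pos_of_connected hnn hc r])
    have h := congrArg (Int.cast (R := ℝ)) (Int.toNat_of_nonneg hmk.le)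
    push_cast at h
    exact ⟨(m + k).toNat, by omega, by rw [hdeg, h]⟩

lemma sub_shortcut (hy : IsEulerian y) {u v w : Fin n}
    (hrt : RootedTri u v w) (hpos : 0 < ev y v w) : IsEulerian (y - shortcut u v w) := by
  obtain ⟨hvw, huv, huw⟩ := hrt
  have hsub := sub_indic_nonneg hy.apply_int hy.nonneg hpos
  have hy' : y - shortcut u v w = y - indic v w + indic v u + indic u w := by
    rw [shortcut_eq]; abel
  have hev : ∀ p q, ev (y - shortcut u v w) p q =
      ev (y - indic v w) p q + ev (indic v u) p q + ev (indic u w) p q := by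
    intro p q; rw [hy', ev_add, ev_add]
  have hev₁ := ev_nonneg hsub
  have hev₂ := ev_nonneg (indic_nonneg v u)
  have hev₃ := ev_nonneg (indic_nonneg u w)
  rw [sub_eq_add_neg]
  refine hy.add (fun e => ?_) (fun r => ?_) (fun e => ?_) ?_
  · obtain ⟨k, hk⟩ := shortcut_apply_int u v w e
    exact ⟨-k, by simp [hk]⟩
  · obtain ⟨k, hk⟩ := dot_delta_shortcut_int huv huw r
    exact ⟨-k, by rw [dot_neg, hk, Int.cast_neg]⟩
  · rw [← sub_eq_add_neg, hy']
    simp only [Pi.add_apply]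
    linarith [hsub e, indic_nonneg v u e, indic_nonneg u w e]
  rw [← sub_eq_add_neg]
  refine hy.2.1.of_adj_reachable fun p q ⟨hpq, hpos'⟩ => ?_
  by_cases h : s(p, q) = s(v, w)
  · have hvu : (supportGraph (y - shortcut u v w)).Adj v u :=
      ⟨huv.symm, by linarith [hev v u, hev₁ v u, hev₃ v u, ev_indic_self huv.symm]⟩
    have huw' : (supportGraph (y - shortcut u v w)).Adj u w :=
      ⟨huw, by linarith [hev u w, hev₁ u w, hev₂ u w, ev_indic_self huw]⟩
    rcases Sym2.eq_iff.1 h with ⟨rfl, rfl⟩ | ⟨rfl, rfl⟩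
    · exact hvu.reachable.trans huw'.reachable
    · exact huw'.symm.reachable.trans hvu.symm.reachable
  · refine SimpleGraph.Adj.reachable ⟨hpq, ?_⟩
    linarith [hev p q, hev₂ p q, hev₃ p q, ev_sub y (indic v w) p q, ev_indic_of_ne h]

/-- Handshake on `C`: the degree sum over `C` counts every edge inside `C` twice. -/
lemma sum_ev_even (hy : IsEulerian y) {C : Finset (Fin n)} {u : Fin n}
    (huC : u ∉ C) (hC : ∀ q ∈ C, ∀ r ∉ C, r ≠ u → ev y q r = 0) :
    ∃ k : ℤ, ∑ q ∈ C, ev y u q = 2 * k := by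
  have hdeg : ∀ q ∈ C, degree y q = ∑ r ∈ C, ev y q r + ev y u q := by
    intro q hq
    rw [degree_eq_sum_ev, ← Finset.sum_subset (Finset.subset_univ (insert u C)),
      Finset.sum_insert huC, ev_symm, add_comm]
    intro r _ hr
    rw [Finset.mem_insert, not_or] at hr
    exact hC q hq r hr.2 hr.1
  choose m _ hm using hy.2.2
  choose k hk using hy.ev_int
  have hsum := sum_sum_eq_two_mul_sum_sum_lt C (ev y) (ev_symm y) (ev_self y)
  have hsplit :
      ∑ q ∈ C, ev y u q = ∑ q ∈ C, degree y q - ∑ q ∈ C, ∑ r ∈ C, ev y q r := by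
    rw [Finset.sum_congr rfl hdeg, Finset.sum_add_distrib]; ring
  refine ⟨∑ q ∈ C, (m q : ℤ) - ∑ q ∈ C, ∑ r ∈ C, if q < r then k q r else 0, ?_⟩
  rw [hsplit, hsum, Finset.sum_congr rfl fun q _ => hm q]
  simp only [hk]
  push_cast [apply_ite]
  rw [← Finset.mul_sum]
  ring

lemma two_le_sum_ev_component (hy : IsEulerian y) {u p : Fin n} (hpu : p ≠ u)
    {C : Finset (Fin n)}
    (hC : ∀ q, q ∈ C ↔ ((supportGraph y).deleteIncidenceSet u).Reachable p q) :
    2 ≤ ∑ q ∈ C, ev y u q := by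
  have huC : u ∉ C := fun h => hpu (SimpleGraph.eq_of_reachable_deleteIncidenceSet ((hC u).1 h))
  have hclosed : ∀ q ∈ C, ∀ r ∉ C, r ≠ u → ev y q r = 0 := by
    intro q hq r hr hru
    by_contra hne
    have hqu : q ≠ u := fun h => huC (h ▸ hq)
    have hadj : (supportGraph y).Adj q r :=
      ⟨ne_of_ev_ne_zero hne, (ev_nonneg hy.nonneg q r).lt_of_ne' hne⟩
    exact hr ((hC r).2 (((hC q).1 hq).trans
      (SimpleGraph.deleteIncidenceSet_adj.2 ⟨hadj, hqu, hru⟩).reachable))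
  obtain ⟨k, hk⟩ := hy.sum_ev_even huC hclosed
  obtain ⟨q, hpq, hqu⟩ := (hy.2.1.preconnected p u).exists_reachable_deleteIncidenceSet_adj hpu
  have hpos : 0 < ∑ q ∈ C, ev y u q := (ev_symm y q u ▸ hqu.2).trans_le
    (Finset.single_le_sum (fun r _ => ev_nonneg hy.nonneg u r) ((hC q).2 hpq))
  rw [hk] at hpos ⊢
  have : (1 : ℤ) ≤ k := by exact_mod_cast (show (0 : ℝ) < k by linarith)
  have : (1 : ℝ) ≤ k := by exact_mod_cast this
  linarith

lemma connected_add_shortcut (hy : IsEulerian y) {u v w : Fin n} (huv : u ≠ v) (huw : u ≠ w)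
    (hu : 4 ≤ degree y u)
    (hvw : ((supportGraph y).deleteIncidenceSet u).Reachable v w →
      ∀ q, 0 < ev y u q → ((supportGraph y).deleteIncidenceSet u).Reachable v q) :
    (supportGraph (y + shortcut u v w)).Connected := by
  classical
  set H := (supportGraph y).deleteIncidenceSet u
  have hHle : H ≤ supportGraph (y + shortcut u v w) := by
    intro p q hpq
    obtain ⟨⟨hne, hpos⟩, hp, hq⟩ := SimpleGraph.deleteIncidenceSet_adj.1 hpq
    refine ⟨hne, ?_⟩
    rw [ev_add, ev_shortcut_of_ne hp hq]
    linarith [ev_nonneg (indic_nonneg v w) p q]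
  have hreach : ∀ p, (supportGraph (y + shortcut u v w)).Reachable u p := by
    intro p
    rcases eq_or_ne p u with rfl | hpu
    · rfl
    set C := Finset.univ.filter (H.Reachable p)
    have hC : ∀ q, q ∈ C ↔ H.Reachable p q := by simp [C]
    have hsum : ∑ q ∈ C, ev (y + shortcut u v w) u q =
        ∑ q ∈ C, ev y u q - (if v ∈ C then 1 else 0) - if w ∈ C then 1 else 0 := by
      simp only [ev_add, ev_shortcut_root huv huw, Finset.sum_add_distrib, Finset.sum_sub_distrib,
        Finset.sum_neg_distrib, Finset.sum_ite_eq']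
      ring
    have hpos : 0 < ∑ q ∈ C, ev (y + shortcut u v w) u q := by
      by_cases hvwC : v ∈ C ∧ w ∈ C
      · have hdeg : ∑ q ∈ C, ev y u q = degree y u := by
          rw [degree_eq_sum_ev]
          refine Finset.sum_subset (Finset.subset_univ _) fun q _ hq => ?_
          by_contra hne
          have hv := (hC v).1 hvwC.1
          exact hq ((hC q).2 (hv.trans (hvw (hv.symm.trans ((hC w).1 hvwC.2)) q
            ((ev_nonneg hy.nonneg u q).lt_of_ne' hne))))
        rw [hsum, hdeg]
        split_ifs <;> linarith
      · have := hy.two_le_sum_ev_component hpu hC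
        rw [hsum]
        split_ifs <;> simp_all <;> linarith
    obtain ⟨q, hqC, hq⟩ := Finset.exists_lt_of_sum_lt (Finset.sum_const_zero.trans_lt hpos)
    have hadj : (supportGraph (y + shortcut u v w)).Adj u q := ⟨ne_of_ev_ne_zero hq.ne', hq⟩
    exact hadj.reachable.trans (((hC q).1 hqC).symm.mono hHle)
  have : Nonempty (Fin n) := ⟨u⟩
  exact SimpleGraph.Connected.mk fun a b => (hreach a).symm.trans (hreach b)

lemma exists_add_shortcut (hy : IsEulerian y) {u : Fin n}
    (hu : 4 ≤ degree y u) : ∃ v w, u ≠ v ∧ u ≠ w ∧ IsEulerian (y + shortcut u v w) := by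
  set H := (supportGraph y).deleteIncidenceSet u
  obtain ⟨v, hv⟩ := exists_ev_pos_of_degree_pos (by linarith : 0 < degree y u)
  have huv := ne_of_ev_ne_zero hv.ne'
  have hint : ∀ e, ∃ k : ℤ, (y - indic u v) e = k := fun e => by
    obtain ⟨k, hk⟩ := hy.apply_int e
    simp only [Pi.sub_apply, indic, hk]
    split_ifs
    exacts [⟨k - 1, by push_cast; ring⟩, ⟨k, by ring⟩]
  have hnn := sub_indic_nonneg hy.apply_int hy.nonneg hv
  obtain ⟨w, hw, hvw⟩ : ∃ w, 0 < ev (y - indic u v) u w ∧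
      (H.Reachable v w → ∀ q, 0 < ev y u q → H.Reachable v q) := by
    by_cases hsplit : ∃ w, 0 < ev y u w ∧ ¬ H.Reachable v w
    · obtain ⟨w, hw, hvw⟩ := hsplit
      have hwv : s(u, w) ≠ s(u, v) := by
        rw [Ne, Sym2.congr_right]; rintro rfl; exact hvw (SimpleGraph.Reachable.refl _)
      exact ⟨w, by rwa [ev_sub, ev_indic_of_ne hwv, sub_zero], fun h => absurd h hvw⟩
    · push Not at hsplit
      have hdeg : degree (y - indic u v) u = degree y u - 1 := by
        have h := dot_delta u (y - indic u v)
        rw [dot_sub, dot_indic, ev_delta, if_pos ⟨huv, Or.inl rfl⟩, dot_delta] at h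
        linarith
      obtain ⟨w, hw⟩ := exists_ev_pos_of_degree_pos (by linarith : 0 < degree (y - indic u v) u)
      exact ⟨w, hw, fun _ => hsplit⟩
  have huw := ne_of_ev_ne_zero hw.ne'
  have hnn' := sub_indic_nonneg hint hnn hw
  refine ⟨v, w, huv, huw, hy.add (shortcut_apply_int u v w) (dot_delta_shortcut_int huv huw)
    (fun e => ?_) (hy.connected_add_shortcut huv huw hu hvw)⟩
  have : y + shortcut u v w = y - indic u v - indic u w + indic v w := by
    rw [shortcut_eq, indic_comm v u]; abel
  rw [this, Pi.add_apply]
  linarith [hnn' e, indic_nonneg v w e]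

end IsEulerian

lemma exists_isEulerian_face_ge {a x : Edge n → ℝ} {α : ℝ}
    (hvalid : ∀ x ∈ gtsp n, α ≤ dot a x) (hx : x ∈ gtsp n) (hxa : dot a x = α)
    (c : Edge n → ℝ) :
    ∃ y, IsEulerian y ∧ dot a y = α ∧ dot c x ≤ dot c y :=
  exists_mem_ge_of_mem_convexHull_of_eq (f := dotProductBilin ℝ ℝ a)
    (fun s hs => hvalid s (subset_convexHull ℝ _ hs)) hx hxa (dotProductBilin ℝ ℝ c)

lemma IsMetric.exists_tri_eq_zero {a : Edge n → ℝ} (ha : IsMetric a) (hn : 2 < n)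
    {u v w : Fin n} (huv : u ≠ v) (huw : u ≠ w) (h : tri a u v w ≤ 0) :
    ∃ v w, RootedTri u v w ∧ tri a u v w = 0 := by
  by_cases hvw : v = w
  · subst hvw
    obtain ⟨w, hwu, hwv⟩ := Fin.exists_ne_and_ne_of_two_lt u v hn
    have hrt : RootedTri u v w := ⟨hwv.symm, huv, hwu.symm⟩
    refine ⟨v, w, hrt, le_antisymm ?_ (ha u v w hrt)⟩
    have := ha v u w ⟨hwu.symm, huv.symm, hwv.symm⟩
    simp only [tri, ev_self] at h this ⊢
    linarith [ev_symm a u v]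
  · exact ⟨v, w, ⟨hvw, huv, huw⟩, le_antisymm h (ha u v w ⟨hvw, huv, huw⟩)⟩

lemma exists_isEulerian_face_ev_pos {a : Edge n → ℝ} {α : ℝ}
    (hvalid : ∀ x ∈ gtsp n, α ≤ dot a x) (hgood : IsGood {x ∈ gtsp n | dot a x = α})
    {v w : Fin n} (hvw : v ≠ w) : ∃ y, IsEulerian y ∧ dot a y = α ∧ 0 < ev y v w := by
  obtain ⟨x, ⟨hx, hxa⟩, hpos⟩ := hgood (mkEdge hvw)
  obtain ⟨y, hy, hya, hxy⟩ := exists_isEulerian_face_ge hvalid hx hxa (indic v w)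
  rw [dot_comm, dot_indic, dot_comm, dot_indic, ev_of_ne x hvw] at hxy
  exact ⟨y, hy, hya, hpos.trans_le hxy⟩

lemma isMetric_of_isGood {a : Edge n → ℝ} {α : ℝ} (hvalid : ∀ x ∈ gtsp n, α ≤ dot a x)
    (hgood : IsGood {x ∈ gtsp n | dot a x = α}) : IsMetric a := fun u v w hrt => by
  obtain ⟨y, hy, hya, hpos⟩ := exists_isEulerian_face_ev_pos hvalid hgood hrt.1
  have := hvalid _ (hy.sub_shortcut hrt hpos).mem_gtsp
  rw [dot_sub, dot_shortcut, hya] at this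
  linarith

lemma exists_face_one_lt_dot_delta {a : Edge n → ℝ} {α : ℝ}
    (hvalid : ∀ x ∈ gtsp n, α ≤ dot a x) (hgood : IsGood {x ∈ gtsp n | dot a x = α})
    {u v w : Fin n} (hrt : RootedTri u v w) (htri : tri a u v w = 0) :
    ∃ x ∈ gtsp n, dot a x = α ∧ 1 < dot (delta u) x := by
  obtain ⟨y, hy, hya, hpos⟩ := exists_isEulerian_face_ev_pos hvalid hgood hrt.1
  refine ⟨_, (hy.sub_shortcut hrt hpos).mem_gtsp,
    by rw [dot_sub, dot_shortcut, hya, htri]; ring, ?_⟩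
  rw [dot_sub, dot_shortcut, tri_delta hrt.2.1 hrt.2.2, if_pos rfl, if_neg fun h => hrt.1 h.1]
  linarith [hy.one_le_dot_delta u]

lemma exists_tri_eq_zero_of_face {a : Edge n → ℝ} {α : ℝ} (hn : 2 < n)
    (hvalid : ∀ x ∈ gtsp n, α ≤ dot a x) (hmet : IsMetric a) {x : Edge n → ℝ} {u : Fin n}
    (hx : x ∈ gtsp n) (hxa : dot a x = α) (hxu : 1 < dot (delta u) x) :
    ∃ v w, RootedTri u v w ∧ tri a u v w = 0 := by
  obtain ⟨y, hy, hya, hxy⟩ := exists_isEulerian_face_ge hvalid hx hxa (delta u)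
  obtain ⟨v, w, huv, huw, hy'⟩ :=
    hy.exists_add_shortcut (hy.four_le_degree (hxu.trans_le hxy))
  have := hvalid _ hy'.mem_gtsp
  rw [dot_add, dot_shortcut, hya] at this
  exact hmet.exists_tri_eq_zero hn huv huw (by linarith)

theorem stmt2_general (n : ℕ) (hn : 5 ≤ n) (a : Edge n → ℝ) (α : ℝ)
    (hvalid : ∀ x ∈ gtsp n, α ≤ dot a x)
    (hgood : IsGood {x ∈ gtsp n | dot a x = α}) :
    IsTT a ↔ ∀ u : Fin n, ∃ x ∈ gtsp n, dot a x = α ∧ 1 < dot (delta u) x := by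
  constructor
  · rintro ⟨-, htt⟩ u
    obtain ⟨v, w, hrt, htri⟩ := htt u
    exact exists_face_one_lt_dot_delta hvalid hgood hrt htri
  · intro h
    have hmet := isMetric_of_isGood hvalid hgood
    refine ⟨hmet, fun u => ?_⟩
    obtain ⟨x, hx, hxa, hxu⟩ := h u
    exact exists_tri_eq_zero_of_face (by omega) hvalid hmet hx hxa hxu

/-- an inequality defining a nonempty good face `F` of `P` is TT
iff `F` is contained in no degree facet. -/
theorem stmt2 (n : ℕ) (hn : 5 ≤ n) (a : Edge n → ℝ) (α : ℝ)
    (hvalid : ∀ x ∈ gtsp n, α ≤ dot a x)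
    (hne : ({x ∈ gtsp n | dot a x = α}).Nonempty)
    (hgood : IsGood {x ∈ gtsp n | dot a x = α}) :
    IsTT a ↔ ∀ u : Fin n, ∃ x ∈ gtsp n, dot a x = α ∧ 1 < dot (delta u) x :=
  stmt2_general n hn a α hvalid hgood

end TSP
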